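/- arXiv:1307.4277 — 3 statements merged into one kernel-verified Lean document; each statement's English description precedes it below -/
import Mathlib

section
/- Let d : ℝ → ℝ be an additive function such that the mapping φ : ℝ → ℝ defined by φ(x) = d(cos(x)) + sin(x)·d(x) is regular (i.e., locally bounded, or continuous, or Lebesgue measurable). Then there exists a real derivation χ : ℝ → ℝ such that d(x) = χ(x) + d(1)·x for all x ∈ ℝ. -/
open Real Set

/-- A function `φ` is locally bounded on a set `s` if every point of `s` has a
neighborhood (within `s`) on which `φ` is bounded. -/
def LocallyBoundedOn (φ : ℝ → ℝ) (s : Set ℝ) : Prop :=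
  ∀ x ∈ s, ∃ C : ℝ, ∀ᶠ y in nhdsWithin x s, |φ y| ≤ C

/-- A real-valued function is *regular* on its domain `s` if it is locally bounded,
or continuous, or Lebesgue measurable on `s`. -/
def RegularOn (φ : ℝ → ℝ) (s : Set ℝ) : Prop :=
  LocallyBoundedOn φ s ∨ ContinuousOn φ s ∨ Measurable (s.restrict φ)

/-- A real derivation: an additive function satisfying the Leibniz rule. -/
def IsRealDerivation (χ : ℝ → ℝ) : Prop :=
  (∀ x y : ℝ, χ (x + y) = χ x + χ y) ∧ (∀ x y : ℝ, χ (x * y) = x * χ y + y * χ x)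

/-!
For fixed `y`, the Leibniz defect `u ↦ d (u * cos y) - u * d (cos y) - cos y * d u` is additive,
and by the addition formulas its composition with `cos` is an explicit combination of shifts of
`φ x = d (cos x) + sin x * d x`. It therefore inherits the regularity of `φ`, which makes it
continuous (directly if `φ` is locally bounded, by Steinhaus' theorem if `φ` is measurable), hence
linear, and evaluating at `1` gives `d (u * v) - u * d v - v * d u = -d 1 * u * v` for `|v| ≤ 1`.
Homogeneity of the additive map `v ↦ d (u * v) - u * d v - v * d u` removes the restriction on
`v`, so `x ↦ d x - d 1 * x` is a derivation.
-/

open Filter Topology Asymptotics MeasureTheory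

lemma div_natFloor_abs_add_one_mem_Icc (x : ℝ) : x / (⌊|x|⌋₊ + 1 : ℕ) ∈ Icc (-1) 1 := by
  have hpos : (0 : ℝ) < (⌊|x|⌋₊ + 1 : ℕ) := by positivity
  rw [mem_Icc, ← abs_le, abs_div, Nat.abs_cast, div_le_one hpos, Nat.cast_succ]
  exact (Nat.lt_floor_add_one |x|).le

namespace AddMonoidHom

lemma continuous_of_isBigO_one_nhds_zero {G H : Type*} [SeminormedAddCommGroup G]
    [SeminormedAddCommGroup H] [NormedSpace ℝ H] (f : G →+ H)
    (hf : f =O[𝓝 0] fun _ => (1 : ℝ)) : Continuous f := by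
  obtain ⟨C, hC⟩ := (isBigO_one_iff ℝ).mp hf
  refine f.continuous_of_isBounded_nhds_zero hC (isBounded_iff_forall_norm_le.mpr ⟨C, ?_⟩)
  rintro _ ⟨x, hx, rfl⟩
  exact hx

lemma map_eq_mul_map_one (f : ℝ →+ ℝ) (hf : Continuous f) (x : ℝ) : f x = f 1 * x := by
  simpa [mul_comm] using map_real_smul f hf x 1

lemma map_eq_natCast_mul_map_div (f : ℝ →+ ℝ) (x : ℝ) {n : ℕ} (hn : n ≠ 0) :
    f x = n * f (x / n) := by
  rw [div_eq_inv_mul, ← smul_eq_mul (n : ℝ)⁻¹, map_inv_natCast_smul f ℝ ℝ, smul_eq_mul,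
    mul_inv_cancel_left₀ (Nat.cast_ne_zero.mpr hn)]

lemma eq_mul_of_eqOn_Icc (f : ℝ →+ ℝ) {c : ℝ} (hf : ∀ x ∈ Icc (-1) 1, f x = c * x) (x : ℝ) :
    f x = c * x := by
  rw [f.map_eq_natCast_mul_map_div x (Nat.succ_ne_zero _),
    hf _ (div_natFloor_abs_add_one_mem_Icc x)]
  field_simp

lemma measurable_of_eqOn_Icc (f : ℝ →+ ℝ) {g : ℝ → ℝ} (hg : Measurable g)
    (hfg : ∀ x ∈ Icc (-1) 1, f x = g x) : Measurable f := by
  have hf : ⇑f = fun x => ((⌊|x|⌋₊ + 1 : ℕ) : ℝ) * g (x / (⌊|x|⌋₊ + 1 : ℕ)) := by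
    funext x
    rw [f.map_eq_natCast_mul_map_div x (Nat.succ_ne_zero _),
      hfg _ (div_natFloor_abs_add_one_mem_Icc x)]
  rw [hf]
  fun_prop

lemma continuous_of_isBigO_comp_cos (f : ℝ →+ ℝ)
    (hf : (f ∘ cos) =O[𝓝 (π / 2)] fun _ => (1 : ℝ)) : Continuous f := by
  refine f.continuous_of_isBigO_one_nhds_zero ?_
  have harccos : Tendsto arccos (𝓝 0) (𝓝 (π / 2)) := by
    simpa using continuous_arccos.tendsto 0
  refine (hf.comp_tendsto harccos).congr' ?_ EventuallyEq.rfl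
  filter_upwards [Icc_mem_nhds (show (-1 : ℝ) < 0 by norm_num) one_pos] with t ht
  simp [cos_arccos ht.1 ht.2]

lemma continuous_of_measurable_comp_cos (f : ℝ →+ ℝ) (hf : Measurable (f ∘ cos)) :
    Continuous f :=
  Measure.AddMonoidHom.continuous_of_measurable f <| f.measurable_of_eqOn_Icc
    (hf.comp continuous_arccos.measurable) fun t ht => by simp [cos_arccos ht.1 ht.2]

end AddMonoidHom

lemma RegularOn.isBigO_one_or_measurable {φ : ℝ → ℝ} (hφ : RegularOn φ univ) :
    (∀ x, φ =O[𝓝 x] fun _ => (1 : ℝ)) ∨ Measurable φ := by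
  rcases hφ with hbdd | hcont | hmeas
  · refine .inl fun x => ?_
    obtain ⟨C, hC⟩ := hbdd x (mem_univ x)
    rw [nhdsWithin_univ] at hC
    exact (isBigO_one_iff ℝ).mpr ⟨C, hC⟩
  · exact .inr (continuousOn_univ.mp hcont).measurable
  · exact .inr (hmeas.comp (MeasurableEquiv.Set.univ ℝ).symm.measurable)

noncomputable def cosineSecondDifference (ψ : ℝ → ℝ) (y x : ℝ) : ℝ :=
  (ψ (x + y) + ψ (x - y) - 2 * cos y * ψ x - 2 * cos x * ψ y) / 2

lemma cosineSecondDifference_isBigO_one {ψ : ℝ → ℝ} (hψ : ∀ x, ψ =O[𝓝 x] fun _ => (1 : ℝ))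
    (y a : ℝ) : cosineSecondDifference ψ y =O[𝓝 a] fun _ => (1 : ℝ) := by
  have hadd := (hψ (a + y)).comp_tendsto ((continuous_add_const y).tendsto a)
  have hsub := (hψ (a - y)).comp_tendsto ((continuous_sub_right y).tendsto a)
  have hcos : ContinuousAt (fun x => 2 * cos x * ψ y) a := by fun_prop
  unfold cosineSecondDifference
  simp only [div_eq_inv_mul]
  exact (((hadd.add hsub).sub ((hψ a).const_mul_left _)).sub hcos.isBigO).const_mul_left _

lemma measurable_cosineSecondDifference {ψ : ℝ → ℝ} (hψ : Measurable ψ) (y : ℝ) :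
    Measurable (cosineSecondDifference ψ y) := by
  unfold cosineSecondDifference
  fun_prop

lemma AddMonoidHom.continuous_of_map_cos_eq (f : ℝ →+ ℝ) {ψ : ℝ → ℝ} (hψ : RegularOn ψ univ)
    (y : ℝ) (hf : ∀ x, f (cos x) = cosineSecondDifference ψ y x) : Continuous f := by
  have hfcos : f ∘ cos = cosineSecondDifference ψ y := funext hf
  rcases hψ.isBigO_one_or_measurable with hbdd | hmeas
  · exact f.continuous_of_isBigO_comp_cos (hfcos ▸ cosineSecondDifference_isBigO_one hbdd y _)
  · exact f.continuous_of_measurable_comp_cos (hfcos ▸ measurable_cosineSecondDifference hmeas y)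

noncomputable def leibnizDefect (D : ℝ →+ ℝ) (v : ℝ) : ℝ →+ ℝ where
  toFun u := D (u * v) - u * D v - v * D u
  map_zero' := by simp
  map_add' a b := by simp only [add_mul, map_add]; ring

@[simp]
lemma leibnizDefect_apply (D : ℝ →+ ℝ) (v u : ℝ) :
    leibnizDefect D v u = D (u * v) - u * D v - v * D u := rfl

lemma leibnizDefect_comm (D : ℝ →+ ℝ) (u v : ℝ) : leibnizDefect D u v = leibnizDefect D v u := by
  simp only [leibnizDefect_apply, mul_comm u v]
  ring

lemma leibnizDefect_one (D : ℝ →+ ℝ) (v : ℝ) : leibnizDefect D v 1 = -(D 1 * v) := by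
  simp only [leibnizDefect_apply, one_mul]
  ring

lemma leibnizDefect_cos_cos (D : ℝ →+ ℝ) (x y : ℝ) :
    leibnizDefect D (cos y) (cos x) =
      cosineSecondDifference (fun x => D (cos x) + sin x * D x) y x := by
  simp only [leibnizDefect_apply, cosineSecondDifference, cos_add, cos_sub, sin_add, sin_sub,
    map_add, map_sub]
  ring

lemma isRealDerivation_sub_mul_of_leibnizDefect_eq (D : ℝ →+ ℝ)
    (hD : ∀ u v, leibnizDefect D u v = -(D 1 * u) * v) :
    IsRealDerivation fun x => D x - D 1 * x := by
  refine ⟨fun x y => ?_, fun x y => ?_⟩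
  · simp only [map_add]
    ring
  · have hyx := hD y x
    rw [leibnizDefect_apply] at hyx
    linear_combination hyx

theorem stmt_2 (d : ℝ → ℝ)
    (hd : ∀ x y : ℝ, d (x + y) = d x + d y)
    (hreg : RegularOn (fun x : ℝ => d (Real.cos x) + Real.sin x * d x) Set.univ) :
    ∃ χ : ℝ → ℝ, IsRealDerivation χ ∧ ∀ x : ℝ, d x = χ x + d 1 * x := by
  set D : ℝ →+ ℝ := AddMonoidHom.mk' d hd
  have hdefect_Icc : ∀ v ∈ Icc (-1 : ℝ) 1, ∀ u, leibnizDefect D v u = -(D 1 * v) * u := by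
    rintro v ⟨hv₁, hv₂⟩ u
    obtain ⟨y, rfl⟩ : ∃ y, cos y = v := ⟨arccos v, cos_arccos hv₁ hv₂⟩
    have hcont := (leibnizDefect D (cos y)).continuous_of_map_cos_eq hreg y
      (leibnizDefect_cos_cos D · y)
    rw [(leibnizDefect D (cos y)).map_eq_mul_map_one hcont, leibnizDefect_one]
  have hdefect : ∀ u v, leibnizDefect D u v = -(D 1 * u) * v := fun u =>
    (leibnizDefect D u).eq_mul_of_eqOn_Icc fun v hv => by
      rw [leibnizDefect_comm, hdefect_Icc v hv u]
      ring
  refine ⟨fun x => D x - D 1 * x, isRealDerivation_sub_mul_of_leibnizDefect_eq D hdefect,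
    fun x => ?_⟩
  show d x = d x - d 1 * x + d 1 * x
  ring
end

section
/- Let d : ℝ → ℝ be an additive function such that the mapping φ defined on (1, ∞) by φ(x) = d(arcosh(x)) − (1/√(x² − 1))·d(x) is regular on (1, ∞) (i.e., locally bounded, or continuous, or Lebesgue measurable), where arcosh(x) = ln(x + √(x² − 1)) is the inverse of cosh restricted to [0, ∞). Then there exists a real derivation χ : ℝ → ℝ such that d(x) = χ(x) + d(1)·x for all x ∈ ℝ. -/
open Real Set

/-!
Put `g s = d (cosh s) - sinh s * d s` and `B u v = d (u v) - u d v - v d u`. The addition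
formulas for `cosh` and `sinh` give
`g (s + t) + g (s - t) = 2 cosh s g t + 2 cosh t g s + 2 B (cosh t) (cosh s)`,
and `g s = -sinh s * φ (cosh s)` for `s > 0`. So for fixed `v = cosh t > 1` the additive function
`u ↦ B v u` agrees on `u > v` with a combination of values of `φ` along continuous curves;
regularity of `φ` makes it bounded on a set of positive measure, and by Steinhaus' theorem it is
linear: `B v u = -d 1 * u * v`. Additivity and symmetry of `B` extend this to all `v`, which says
exactly that `d - d 1 * id` is a derivation.
-/

open Filter Topology MeasureTheory Asymptotics
open scoped Pointwise

def IsBoundedOnPosMeasure (f : ℝ → ℝ) : Prop :=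
  ∃ S : Set ℝ, MeasurableSet S ∧ 0 < volume S ∧ ∃ C : ℝ, ∀ x ∈ S, |f x| ≤ C

namespace IsBoundedOnPosMeasure

variable {f : ℝ → ℝ}

theorem of_boundedAtFilter_nhds {x : ℝ} (hf : BoundedAtFilter (𝓝 x) f) :
    IsBoundedOnPosMeasure f := by
  obtain ⟨C, hC⟩ := hf.bound
  obtain ⟨δ, hδ, hball⟩ := Metric.eventually_nhds_iff_ball.mp hC
  exact ⟨Metric.ball x δ, measurableSet_ball, Metric.measure_ball_pos volume x hδ, C,
    fun y hy => by simpa using hball y hy⟩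

theorem of_eqOn_measurable {g : ℝ → ℝ} {U : Set ℝ} (hg : Measurable g)
    (hU : MeasurableSet U) (hU₀ : 0 < volume U) (hfg : EqOn f g U) : IsBoundedOnPosMeasure f := by
  set S : ℕ → Set ℝ := fun n => U ∩ {x | |g x| ≤ n}
  have hcover : ⋃ n, S n = U := by
    refine Subset.antisymm (iUnion_subset fun n => inter_subset_left) fun x hx => ?_
    obtain ⟨n, hn⟩ := exists_nat_ge |g x|
    exact mem_iUnion.mpr ⟨n, hx, hn⟩
  obtain ⟨n, hn⟩ := exists_measure_pos_of_not_measure_iUnion_null (μ := volume) (s := S)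
    (by rw [hcover]; exact hU₀.ne')
  refine ⟨S n, hU.inter (measurableSet_le hg.abs measurable_const), hn, n, ?_⟩
  rintro x ⟨hxU, hx⟩
  rw [hfg hxU]
  exact hx

end IsBoundedOnPosMeasure

theorem LocallyBoundedOn.boundedAtFilter_comp {φ : ℝ → ℝ} {s : Set ℝ}
    (hφ : LocallyBoundedOn φ s) (hs : IsOpen s) {f : ℝ → ℝ} {x : ℝ} (hf : ContinuousAt f x)
    (hfx : f x ∈ s) :
    BoundedAtFilter (𝓝 x) (φ ∘ f) := by
  obtain ⟨C, hC⟩ := hφ _ hfx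
  rw [hs.nhdsWithin_eq hfx] at hC
  have hφO : BoundedAtFilter (𝓝 (f x)) φ :=
    IsBigO.of_bound C (hC.mono fun y hy => by simpa using hy)
  exact hφO.comp_tendsto hf

@[fun_prop]
theorem Real.measurable_arcosh : Measurable arcosh := by
  unfold arcosh; fun_prop

namespace AddMonoidHom

theorem eq_map_one_mul_of_isBoundedOnPosMeasure (h : ℝ →+ ℝ)
    (hh : IsBoundedOnPosMeasure h) (x : ℝ) : h x = h 1 * x := by
  obtain ⟨S, hS, hS₀, C, hC⟩ := hh
  have hbdd : Bornology.IsBounded (h '' (S - S)) := by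
    refine isBounded_iff_forall_norm_le.mpr ⟨C + C, ?_⟩
    rintro _ ⟨_, ⟨a, ha, b, hb, rfl⟩, rfl⟩
    rw [map_sub, Real.norm_eq_abs]
    exact (abs_sub _ _).trans (add_le_add (hC a ha) (hC b hb))
  -- Steinhaus: `S - S` is a neighbourhood of `0`.
  have hcont : Continuous h := h.continuous_of_isBounded_nhds_zero
    (Measure.sub_mem_nhds_zero_of_addHaar_pos volume S hS hS₀) hbdd
  simpa [mul_comm] using map_real_smul h hcont x 1

theorem eq_mul_of_eq_mul_of_lt (h : ℝ →+ ℝ) {a c : ℝ}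
    (hh : ∀ y, c < y → h y = a * y) (x : ℝ) : h x = a * x := by
  set y := |x| + |c| + 1
  have hy : c < y := by linarith [le_abs_self c, abs_nonneg x]
  have hxy : c < x + y := by linarith [le_abs_self c, neg_abs_le x]
  have := map_add h x y
  rw [hh _ hxy, hh _ hy] at this
  linarith

variable (D : ℝ →+ ℝ)

def leibnizDefect (v : ℝ) : ℝ →+ ℝ :=
  AddMonoidHom.mk' (fun u => D (u * v) - u * D v - v * D u) fun x y => by
    simp only [add_mul, map_add]
    ring

theorem leibnizDefect_apply (v u : ℝ) : D.leibnizDefect v u = D (u * v) - u * D v - v * D u :=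
  rfl

theorem leibnizDefect_comm (u v : ℝ) : D.leibnizDefect v u = D.leibnizDefect u v := by
  simp only [leibnizDefect_apply, mul_comm u v]
  ring

noncomputable def coshDefect (s : ℝ) : ℝ := D (cosh s) - sinh s * D s

noncomputable def arcoshDefect (x : ℝ) : ℝ := D (arcosh x) - (1 / √(x ^ 2 - 1)) * D x

theorem coshDefect_eq_neg_sinh_mul_arcoshDefect {s : ℝ} (hs : 0 < s) :
    D.coshDefect s = -sinh s * D.arcoshDefect (cosh s) := by
  have hsinh : 0 < sinh s := sinh_pos_iff.mpr hs
  have hsqrt : √(cosh s ^ 2 - 1) = sinh s := by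
    rw [cosh_sq', add_sub_cancel_left, sqrt_sq hsinh.le]
  rw [coshDefect, arcoshDefect, arcosh_cosh hs.le, hsqrt]
  field_simp
  ring

theorem coshDefect_add_add_coshDefect_sub (s t : ℝ) :
    D.coshDefect (s + t) + D.coshDefect (s - t) =
      2 * cosh s * D.coshDefect t + 2 * cosh t * D.coshDefect s +
        2 * D.leibnizDefect (cosh t) (cosh s) := by
  have hcosh : cosh (s + t) + cosh (s - t) = 2 * (cosh s * cosh t) := by
    rw [cosh_add, cosh_sub]; ring
  have hD : D (cosh (s + t)) + D (cosh (s - t)) = 2 * D (cosh s * cosh t) := by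
    rw [← map_add, hcosh, two_mul, map_add, two_mul]
  simp only [coshDefect, leibnizDefect_apply, sinh_add, sinh_sub, map_add, map_sub]
  linear_combination hD

/-- For `u > v > 1`, `s = arcosh u`, `t = arcosh v`, this is `coshDefect_add_add_coshDefect_sub`
solved for `D.leibnizDefect v u`, with each `coshDefect` written through `arcoshDefect` and
`arcoshDefect` then replaced by `ψ`. -/
noncomputable def leibnizDefectViaArcoshDefect (ψ : ℝ → ℝ) (v u : ℝ) : ℝ :=
  v * sinh (arcosh u) * ψ u - u * D.coshDefect (arcosh v) -
    2⁻¹ * (sinh (arcosh u + arcosh v) * ψ (cosh (arcosh u + arcosh v)) +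
      sinh (arcosh u - arcosh v) * ψ (cosh (arcosh u - arcosh v)))

variable {D}

theorem leibnizDefect_eq_leibnizDefectViaArcoshDefect {ψ : ℝ → ℝ}
    (hψ : EqOn ψ D.arcoshDefect (Ioi 1)) {u v : ℝ} (hv : 1 < v) (hvu : v < u) :
    D.leibnizDefect v u = D.leibnizDefectViaArcoshDefect ψ v u := by
  rw [leibnizDefectViaArcoshDefect]
  set s := arcosh u
  set t := arcosh v
  have ht : 0 < t := arcosh_pos hv
  have hts : t < s := (arcosh_lt_arcosh (by linarith) (by linarith)).mpr hvu
  have hψ' : ∀ r, 0 < r → ψ (cosh r) = D.arcoshDefect (cosh r) := fun r hr =>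
    hψ (one_lt_cosh.mpr hr.ne')
  have hs : cosh s = u := cosh_arcosh (by linarith)
  have ht' : cosh t = v := cosh_arcosh hv.le
  have key := D.coshDefect_add_add_coshDefect_sub s t
  rw [coshDefect_eq_neg_sinh_mul_arcoshDefect D (by linarith : 0 < s + t),
    coshDefect_eq_neg_sinh_mul_arcoshDefect D (by linarith : 0 < s - t),
    coshDefect_eq_neg_sinh_mul_arcoshDefect D (by linarith : 0 < s), hs, ht'] at key
  rw [hψ' _ (by linarith : 0 < s + t),
    hψ' _ (by linarith : 0 < s - t), ← hs, hψ' _ (by linarith : 0 < s), hs]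
  linear_combination -key / 2

variable {v : ℝ}

theorem isBoundedOnPosMeasure_leibnizDefect_of_locallyBoundedOn
    (hφ : LocallyBoundedOn D.arcoshDefect (Ioi 1)) (hv : 1 < v) :
    IsBoundedOnPosMeasure (D.leibnizDefect v) := by
  set u₀ := v + 1
  have hu₀ : 1 < u₀ := by linarith
  have hts : arcosh v < arcosh u₀ :=
    (arcosh_lt_arcosh (by linarith) (by linarith)).mpr (by linarith)
  have hAt : ContinuousAt arcosh u₀ := continuousOn_arcosh.continuousAt (Ici_mem_nhds hu₀)
  have hc : ∀ {c : ℝ → ℝ}, ContinuousAt c u₀ → BoundedAtFilter (𝓝 u₀) c :=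
    fun hc => hc.tendsto.isBigO_one ℝ
  have hφc : ∀ {r : ℝ → ℝ}, ContinuousAt r u₀ → 0 < r u₀ →
      BoundedAtFilter (𝓝 u₀) fun u => D.arcoshDefect (cosh (r u)) := fun hr hr₀ =>
    hφ.boundedAtFilter_comp isOpen_Ioi (continuous_cosh.continuousAt.comp hr)
      (one_lt_cosh.mpr hr₀.ne')
  have h₁ : BoundedAtFilter (𝓝 u₀) fun u => v * sinh (arcosh u) * D.arcoshDefect u :=
    (hc (by fun_prop)).mul (hφ.boundedAtFilter_comp isOpen_Ioi continuousAt_id hu₀)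
  have h₂ : BoundedAtFilter (𝓝 u₀) fun u => u * D.coshDefect (arcosh v) := hc (by fun_prop)
  have h₃ : BoundedAtFilter (𝓝 u₀) fun u =>
      sinh (arcosh u + arcosh v) * D.arcoshDefect (cosh (arcosh u + arcosh v)) :=
    (hc (by fun_prop)).mul (hφc (by fun_prop) (by linarith [arcosh_pos hv]))
  have h₄ : BoundedAtFilter (𝓝 u₀) fun u =>
      sinh (arcosh u - arcosh v) * D.arcoshDefect (cosh (arcosh u - arcosh v)) :=
    (hc (by fun_prop)).mul (hφc (by fun_prop) (by linarith))
  have hrepr : BoundedAtFilter (𝓝 u₀) (D.leibnizDefectViaArcoshDefect D.arcoshDefect v) :=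
    (h₁.sub h₂).sub ((h₃.add h₄).const_mul_left 2⁻¹)
  refine .of_boundedAtFilter_nhds (hrepr.congr' ?_ EventuallyEq.rfl)
  filter_upwards [lt_mem_nhds (by linarith : v < u₀)] with u hu
  exact (leibnizDefect_eq_leibnizDefectViaArcoshDefect (fun _ _ => rfl) hv hu).symm

theorem isBoundedOnPosMeasure_leibnizDefect_of_measurable
    (hφ : Measurable ((Ioi 1).domRestrict D.arcoshDefect)) (hv : 1 < v) :
    IsBoundedOnPosMeasure (D.leibnizDefect v) := by
  obtain ⟨ψ, hψ, hψφ⟩ := (MeasurableEmbedding.subtype_coe measurableSet_Ioi).exists_measurable_extend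
      hφ fun _ => ⟨0⟩
  have hψφ' : EqOn ψ D.arcoshDefect (Ioi 1) := fun x hx => congr_fun hψφ ⟨x, hx⟩
  have hrepr : Measurable (D.leibnizDefectViaArcoshDefect ψ v) := by
    unfold leibnizDefectViaArcoshDefect; fun_prop
  exact .of_eqOn_measurable hrepr measurableSet_Ioi (by simp)
    fun u hu => leibnizDefect_eq_leibnizDefectViaArcoshDefect hψφ' hv hu

theorem isBoundedOnPosMeasure_leibnizDefect (hφ : RegularOn D.arcoshDefect (Ioi 1))
    (hv : 1 < v) : IsBoundedOnPosMeasure (D.leibnizDefect v) := by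
  rcases hφ with hbdd | hcont | hmeas
  · exact isBoundedOnPosMeasure_leibnizDefect_of_locallyBoundedOn hbdd hv
  · exact isBoundedOnPosMeasure_leibnizDefect_of_measurable hcont.domRestrict.measurable hv
  · exact isBoundedOnPosMeasure_leibnizDefect_of_measurable hmeas hv

theorem leibnizDefect_eq_of_isBoundedOnPosMeasure
    (h : ∀ v, 1 < v → IsBoundedOnPosMeasure (D.leibnizDefect v)) (v u : ℝ) :
    D.leibnizDefect v u = -(D 1 * u * v) := by
  have hgt : ∀ v, 1 < v → ∀ u, D.leibnizDefect v u = -(D 1 * u * v) := fun v hv u => by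
    rw [(D.leibnizDefect v).eq_map_one_mul_of_isBoundedOnPosMeasure (h v hv),
      leibnizDefect_apply, one_mul]
    ring
  rw [leibnizDefect_comm, (D.leibnizDefect u).eq_mul_of_eq_mul_of_lt (a := -(D 1 * u)) (c := 1)
    fun y hy => by rw [← leibnizDefect_comm, hgt y hy]; ring]
  ring

theorem isRealDerivation_sub_map_one_mul (h : ∀ v u, D.leibnizDefect v u = -(D 1 * u * v)) :
    IsRealDerivation fun x => D x - D 1 * x := by
  refine ⟨fun x y => by simp only [map_add]; ring, fun x y => ?_⟩
  have hxy := h y x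
  rw [leibnizDefect_apply] at hxy
  linear_combination hxy

end AddMonoidHom

theorem stmt_10 (d : ℝ → ℝ)
    (hd : ∀ x y : ℝ, d (x + y) = d x + d y)
    (hreg : RegularOn
      (fun x : ℝ => d (Real.log (x + Real.sqrt (x ^ 2 - 1))) -
        (1 / Real.sqrt (x ^ 2 - 1)) * d x)
      (Set.Ioi 1)) :
    ∃ χ : ℝ → ℝ, IsRealDerivation χ ∧ ∀ x : ℝ, d x = χ x + d 1 * x := by
  set D : ℝ →+ ℝ := AddMonoidHom.mk' d hd
  have hB := D.leibnizDefect_eq_of_isBoundedOnPosMeasure fun _ hv =>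
    AddMonoidHom.isBoundedOnPosMeasure_leibnizDefect (D := D) hreg hv
  exact ⟨fun x => d x - d 1 * x, AddMonoidHom.isRealDerivation_sub_map_one_mul hB,
    fun x => by ring⟩
end

section
/- Let ε > 0 and let f : ℝ → ℝ be a function satisfying |f(x + y) − f(x) − f(y)| ≤ ε for all x, y ∈ ℝ, and such that the mapping x ↦ f(sinh(x)) − cosh(x)·f(x) is locally bounded on ℝ. Then there exist a real number λ and a real derivation χ : ℝ → ℝ such that |f(x) − (χ(x) + λ·x)| ≤ ε for all x ∈ ℝ. -/
open Real Set

/-!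
By Hyers' theorem `f` lies within `ε` of an additive `A`, and `x ↦ A (sinh x) - cosh x * A x`
is then still locally bounded; call it `g`. For additive `A` the addition formulas give
`(g (x + y) + g (x - y)) / 2 - cosh y * g x = D (sinh x) - sinh y * A y * sinh x` with
`D u = A (u * cosh y) - cosh y * A u` additive, so `D` is bounded near `0` and hence linear.
Thus `χ = A - A 1 • id` obeys the Leibniz rule against every `v = cosh y ≥ 1`, and by
additivity against every `v`.
-/

open Filter Topology

theorem exists_addMonoidHom_norm_sub_le {G F : Type*} [AddCommMonoid G] [NormedAddCommGroup F]
    [NormedSpace ℝ F] [CompleteSpace F] {ε : ℝ} {f : G → F}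
    (hf : ∀ x y, ‖f (x + y) - f x - f y‖ ≤ ε) : ∃ A : G →+ F, ∀ x, ‖f x - A x‖ ≤ ε := by
  set a : G → ℕ → F := fun x n => (2 ^ n : ℝ)⁻¹ • f (2 ^ n • x)
  have hstep (x : G) (n : ℕ) : dist (a x n) (a x (n + 1)) ≤ ε / 2 / 2 ^ n := by
    set z := 2 ^ n • x
    have hz : 2 ^ (n + 1) • x = z + z := by rw [pow_succ, mul_nsmul, two_nsmul]
    have : a x n - a x (n + 1) = -(2 ^ (n + 1) : ℝ)⁻¹ • (f (z + z) - f z - f z) := by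
      simp only [a, hz]; module
    rw [dist_eq_norm, this, norm_smul, norm_neg, norm_inv, norm_pow, Real.norm_two,
      show ε / 2 / 2 ^ n = (2 ^ (n + 1))⁻¹ * ε by ring]
    gcongr
    exact hf z z
  have hlim (x : G) : ∃ L, Tendsto (a x) atTop (𝓝 L) :=
    cauchySeq_tendsto_of_complete (cauchySeq_of_le_geometric_two (hstep x))
  choose A hA using hlim
  have hA_add (x y : G) : A (x + y) = A x + A y := by
    have hdefect (n : ℕ) : ‖a (x + y) n - a x n - a y n‖ ≤ ε * (2⁻¹) ^ n := by
      have : a (x + y) n - a x n - a y n =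
          (2 ^ n : ℝ)⁻¹ • (f (2 ^ n • x + 2 ^ n • y) - f (2 ^ n • x) - f (2 ^ n • y)) := by
        simp only [a, nsmul_add]; module
      rw [this, norm_smul, norm_inv, norm_pow, Real.norm_two, inv_pow, mul_comm]
      gcongr
      exact hf _ _
    have h0 : Tendsto (fun n => a (x + y) n - a x n - a y n) atTop (𝓝 0) :=
      squeeze_zero_norm hdefect <| by
        simpa using (tendsto_pow_atTop_nhds_zero_of_lt_one (r := (2 : ℝ)⁻¹)
          (by norm_num) (by norm_num)).const_mul ε
    have := tendsto_nhds_unique (((hA (x + y)).sub (hA x)).sub (hA y)) h0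
    rwa [sub_sub, sub_eq_zero] at this
  refine ⟨AddMonoidHom.mk' A hA_add, fun x => ?_⟩
  have := dist_le_of_le_geometric_two_of_tendsto₀ (hstep x) (hA x)
  simpa [a, dist_eq_norm] using this

theorem LocallyBoundedOn.of_abs_sub_le {φ ψ b : ℝ → ℝ} {s : Set ℝ} (hφ : LocallyBoundedOn φ s)
    (hb : ContinuousOn b s) (hψ : ∀ x ∈ s, |ψ x - φ x| ≤ b x) : LocallyBoundedOn ψ s := by
  intro x hx
  obtain ⟨C, hC⟩ := hφ x hx
  refine ⟨C + (b x + 1), ?_⟩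
  filter_upwards [hC, (hb x hx).eventually_lt_const (lt_add_one (b x)), self_mem_nhdsWithin]
    with y hφy hby hy
  linarith [abs_sub_abs_le_abs_sub (ψ y) (φ y), hψ y hy]

theorem LocallyBoundedOn.exists_eventually_abs_comp_le {φ : ℝ → ℝ} {α : Type*} {g : α → ℝ}
    {l : Filter α} {a : ℝ} (hφ : LocallyBoundedOn φ univ) (hg : Tendsto g l (𝓝 a)) :
    ∃ C, ∀ᶠ x in l, |φ (g x)| ≤ C := by
  obtain ⟨C, hC⟩ := hφ a (mem_univ a)
  rw [nhdsWithin_univ] at hC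
  exact ⟨C, hg.eventually hC⟩

theorem AddMonoidHom.eq_mul_map_one_of_eventually_abs_le (E : ℝ →+ ℝ) {C : ℝ}
    (hE : ∀ᶠ u in 𝓝 0, |E u| ≤ C) (u : ℝ) : E u = u * E 1 := by
  have hcont : Continuous E := E.continuous_of_isBounded_nhds_zero hE <|
    (Metric.isBounded_Icc (-C) C).subset <| by
      rintro _ ⟨v, hv, rfl⟩
      exact abs_le.mp hv
  simpa using map_real_smul E hcont u 1

theorem isRealDerivation_of_leibniz_of_one_le (χ : ℝ →+ ℝ)
    (hχ : ∀ u v, 1 ≤ v → χ (u * v) = u * χ v + v * χ u) : IsRealDerivation χ := by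
  refine ⟨map_add χ, fun u w => ?_⟩
  obtain ⟨n, hn⟩ := exists_nat_ge (max 1 (1 - w))
  have hn₁ : (1 : ℝ) ≤ n := (le_max_left _ _).trans hn
  have hwn : 1 ≤ w + n := by linarith [(le_max_right _ _).trans hn]
  have h := hχ u (w + n) hwn
  rw [mul_add, map_add, map_add, hχ u n hn₁] at h
  linarith

noncomputable def sinhDefect (f : ℝ → ℝ) (x : ℝ) : ℝ := f (sinh x) - cosh x * f x

theorem abs_sinhDefect_sub_le {f g : ℝ → ℝ} {ε : ℝ} (h : ∀ x, |f x - g x| ≤ ε) (x : ℝ) :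
    |sinhDefect g x - sinhDefect f x| ≤ ε * (1 + cosh x) := by
  have hsplit : sinhDefect g x - sinhDefect f x
      = -(f (sinh x) - g (sinh x)) + cosh x * (f x - g x) := by
    simp only [sinhDefect]; ring
  calc |sinhDefect g x - sinhDefect f x|
      ≤ |f (sinh x) - g (sinh x)| + cosh x * |f x - g x| := by
        rw [hsplit]
        exact (abs_add_le _ _).trans_eq (by rw [abs_neg, abs_mul, abs_of_pos (cosh_pos x)])
    _ ≤ ε + cosh x * ε := by gcongr <;> exact h _
    _ = ε * (1 + cosh x) := by ring

theorem AddMonoidHom.sinhDefect_add_add_sub (A : ℝ →+ ℝ) (x y : ℝ) :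
    (sinhDefect A (x + y) + sinhDefect A (x - y)) / 2 - cosh y * sinhDefect A x
      = A (sinh x * cosh y) - cosh y * A (sinh x) - sinh y * A y * sinh x := by
  have hsum : A (sinh (x + y)) + A (sinh (x - y)) = 2 * A (sinh x * cosh y) := by
    rw [← map_add, sinh_add, sinh_sub, two_mul, ← map_add]
    ring_nf
  simp only [sinhDefect, cosh_add, cosh_sub, map_add, map_sub]
  linear_combination hsum / 2

theorem AddMonoidHom.map_mul_cosh (A : ℝ →+ ℝ) (hA : LocallyBoundedOn (sinhDefect A) univ)
    (y u : ℝ) : A (u * cosh y) = cosh y * A u + (A (cosh y) - cosh y * A 1) * u := by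
  set D : ℝ →+ ℝ := AddMonoidHom.mk' (fun u => A (u * cosh y) - cosh y * A u - sinh y * A y * u)
    (fun a b => by simp only [add_mul, map_add]; ring)
  obtain ⟨C₁, hC₁⟩ := hA.exists_eventually_abs_comp_le ((continuous_add_const y).tendsto 0)
  obtain ⟨C₂, hC₂⟩ := hA.exists_eventually_abs_comp_le ((continuous_sub_right y).tendsto 0)
  obtain ⟨C₃, hC₃⟩ := hA.exists_eventually_abs_comp_le (tendsto_id (x := 𝓝 0))
  have hsinh : ∀ᶠ x in 𝓝 0, |D (sinh x)| ≤ (C₁ + C₂) / 2 + cosh y * C₃ := by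
    filter_upwards [hC₁, hC₂, hC₃] with x h₁ h₂ h₃
    simp only [D, AddMonoidHom.mk'_apply, ← A.sinhDefect_add_add_sub]
    have hcosh : |cosh y| = cosh y := abs_of_pos (cosh_pos y)
    calc _ ≤ |(sinhDefect A (x + y) + sinhDefect A (x - y)) / 2| + |cosh y * sinhDefect A x| :=
          abs_sub _ _
      _ = |sinhDefect A (x + y) + sinhDefect A (x - y)| / 2 + cosh y * |sinhDefect A x| := by
          rw [abs_div, abs_two, abs_mul, hcosh]
      _ ≤ (C₁ + C₂) / 2 + cosh y * C₃ := by
          gcongr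
          · exact (abs_add_le _ _).trans (add_le_add h₁ h₂)
          · exact h₃
  have hD : ∀ᶠ u in 𝓝 0, |D u| ≤ (C₁ + C₂) / 2 + cosh y * C₃ := by
    have := continuous_arsinh.tendsto' 0 0 arsinh_zero
    filter_upwards [this.eventually hsinh] with u hu
    rwa [sinh_arsinh] at hu
  have := D.eq_mul_map_one_of_eventually_abs_le hD u
  simp only [D, AddMonoidHom.mk'_apply, one_mul] at this
  linear_combination this

theorem stmt_16_general (ε : ℝ) (f : ℝ → ℝ)
    (hf : ∀ x y : ℝ, |f (x + y) - f x - f y| ≤ ε)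
    (hlb : LocallyBoundedOn (fun x : ℝ => f (Real.sinh x) - Real.cosh x * f x) Set.univ) :
    ∃ (l : ℝ) (χ : ℝ → ℝ), IsRealDerivation χ ∧
      ∀ x : ℝ, |f x - (χ x + l * x)| ≤ ε := by
  obtain ⟨A, hfA⟩ := exists_addMonoidHom_norm_sub_le (f := f) hf
  have hA : LocallyBoundedOn (sinhDefect A) univ :=
    LocallyBoundedOn.of_abs_sub_le (φ := sinhDefect f) hlb (by fun_prop)
      fun x _ => abs_sinhDefect_sub_le hfA x
  let χ : ℝ →+ ℝ := A - AddMonoidHom.mulLeft (A 1)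
  have hχ : IsRealDerivation χ := by
    refine isRealDerivation_of_leibniz_of_one_le χ fun u v hv => ?_
    have hmul := A.map_mul_cosh hA (arcosh v) u
    rw [cosh_arcosh hv] at hmul
    simp only [χ, AddMonoidHom.sub_apply, AddMonoidHom.coe_mulLeft, hmul]
    ring
  refine ⟨A 1, χ, hχ, fun x => ?_⟩
  simpa [χ] using hfA x

theorem stmt_16 (ε : ℝ) (hε : 0 < ε) (f : ℝ → ℝ)
    (hf : ∀ x y : ℝ, |f (x + y) - f x - f y| ≤ ε)
    (hlb : LocallyBoundedOn (fun x : ℝ => f (Real.sinh x) - Real.cosh x * f x) Set.univ) :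
    ∃ (l : ℝ) (χ : ℝ → ℝ), IsRealDerivation χ ∧
      ∀ x : ℝ, |f x - (χ x + l * x)| ≤ ε :=
  stmt_16_general ε f hf hlb
end
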